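/- Let f(σ) = aσ + bσ³ + cσ⁵ satisfy f(1) = 1 and f'(1) = 0, so that a = (3+2c)/2 and b = −(1+4c)/2. Then f'(σ) ≥ 0 for all σ ∈ [0,1] if and only if −3/2 ≤ c ≤ 3/8. -/

import Mathlib

/-!
Stationarity at `σ = 1` says that `u = 1` is a root of the quadratic
`g(u) = a + 3bu + 5cu²` with `f'(σ) = g(σ²)`, so `f'(σ) = (1 - σ²)(a - 5cσ²)`.
On `[0,1)` the first factor is positive, so monotonicity amounts to the affine
function `u ↦ a - 5cu` being nonnegative on `[0,1]`, i.e. at its endpoints: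
`a = (3+2c)/2 ≥ 0` and `a - 5c = (3-8c)/2 ≥ 0`.
-/

open Set

theorem hasDerivAt_odd_quintic (a b c x : ℝ) :
    HasDerivAt (fun σ => a * σ + b * σ ^ 3 + c * σ ^ 5)
      (a + 3 * b * x ^ 2 + 5 * c * x ^ 4) x := by
  have h := (((hasDerivAt_id' x).const_mul a).add
    ((hasDerivAt_pow 3 x).const_mul b)).add ((hasDerivAt_pow 5 x).const_mul c)
  exact h.congr_deriv (by norm_num; ring)

theorem odd_quintic_deriv_eq_mul {a b c : ℝ} (h : a + 3 * b + 5 * c = 0) (x : ℝ) :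
    a + 3 * b * x ^ 2 + 5 * c * x ^ 4 = (1 - x ^ 2) * (a - 5 * c * x ^ 2) := by
  linear_combination x ^ 2 * h

theorem forall_Icc_nonneg_one_sub_sq_mul_iff (g : ℝ → ℝ) :
    (∀ σ ∈ Icc (0 : ℝ) 1, 0 ≤ (1 - σ ^ 2) * g (σ ^ 2)) ↔ ∀ u ∈ Ico (0 : ℝ) 1, 0 ≤ g u := by
  constructor
  · rintro h u ⟨hu0, hu1⟩
    have hσ : √u ∈ Icc (0 : ℝ) 1 := ⟨Real.sqrt_nonneg u, Real.sqrt_le_one.mpr hu1.le⟩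
    have := h _ hσ
    rw [Real.sq_sqrt hu0] at this
    exact nonneg_of_mul_nonneg_right this (by linarith)
  · rintro h σ ⟨hσ0, hσ1⟩
    rcases hσ1.lt_or_eq with hσ1 | rfl
    · have hsq : σ ^ 2 < 1 := by nlinarith
      exact mul_nonneg (by linarith) (h _ ⟨sq_nonneg σ, hsq⟩)
    · simp

theorem forall_Ico_nonneg_affine_iff (p q : ℝ) :
    (∀ u ∈ Ico (0 : ℝ) 1, 0 ≤ p - q * u) ↔ 0 ≤ p ∧ 0 ≤ p - q := by
  constructor
  · intro h
    have hclosed : IsClosed {u : ℝ | 0 ≤ p - q * u} :=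
      isClosed_le continuous_const (by fun_prop)
    have hIcc : Icc (0 : ℝ) 1 ⊆ {u | 0 ≤ p - q * u} := by
      rw [← closure_Ico zero_ne_one]
      exact hclosed.closure_subset_iff.mpr h
    have h0 := hIcc (left_mem_Icc.mpr zero_le_one)
    have h1 := hIcc (right_mem_Icc.mpr zero_le_one)
    exact ⟨by simpa using h0, by simpa using h1⟩
  · rintro ⟨hp, hpq⟩ u ⟨hu0, hu1⟩
    -- `p - q u` is the convex combination `(1 - u) p + u (p - q)`.
    linarith [mul_nonneg (sub_nonneg.mpr hu1.le) hp, mul_nonneg hu0 hpq]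

/-- For an odd quintic `f(σ) = aσ + bσ³ + cσ⁵` with `f(1) = 1` and `f'(1) = 0`
(equivalently `a = (3+2c)/2` and `b = −(1+4c)/2`), the derivative is nonnegative
on `[0,1]` if and only if `−3/2 ≤ c ≤ 3/8`. -/
theorem promotion_monotone_iff (a b c : ℝ)
    (f : ℝ → ℝ) (hf : f = fun σ => a * σ + b * σ ^ 3 + c * σ ^ 5)
    (h1 : f 1 = 1) (h2 : deriv f 1 = 0) :
    (∀ σ ∈ Set.Icc (0 : ℝ) 1, 0 ≤ deriv f σ) ↔ (-(3 / 2) ≤ c ∧ c ≤ 3 / 8) := by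
  subst hf
  have hderiv (x : ℝ) := (hasDerivAt_odd_quintic a b c x).deriv
  have hsum : a + b + c = 1 := by simpa using h1
  have hstat : a + 3 * b + 5 * c = 0 := by simpa [hderiv] using h2
  simp only [hderiv, odd_quintic_deriv_eq_mul hstat]
  rw [forall_Icc_nonneg_one_sub_sq_mul_iff (fun u => a - 5 * c * u),
    forall_Ico_nonneg_affine_iff]
  constructor <;> rintro ⟨_, _⟩ <;> constructor <;> linarith
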